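/- Fix j ≥ 1 and 0 ≤ i ≤ p − 2, and let ψ : ℓ_{pj+i} → B₁/F^{pj}B₁ be the composite of inclusion and projection. Then the cokernel of ψ is spanned by the classes of the monomials m τ̄_2 where m is a τ̄_2-free monomial with p(p(j−1)+i) < wt(m) ≤ p²j − p, and the induced E(2)-action on coker ψ satisfies Q_r[m τ̄_2] = [(Q_r m) τ̄_2] for r = 0,1,2. Consequently coker ψ ≅ ⊕_{k=i+1}^{p−1} Σ^{φ(j,k)} ℓ_{j−1} as graded E(2)-modules, where φ(j,k) = 2(p−1)(p(j−1)+k) + 2p² − 1; in total one obtains an exact sequence of E(2)-modules 0 → ⊕_{k=0}^{i} M_2(pj+k) → ℓ_{pj+i} → B₁/F^{pj}B₁ → ⊕_{k=i+1}^{p−1} Σ^{φ(j,k)} ℓ_{j−1} → 0. -/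

import Mathlib

/-- A monomial of `B n = F_p[ζ₁, ζ₂, …] ⊗ Λ(τ̄_{n+1}, τ̄_{n+2}, …)`:
`e k` is the exponent of `ζ_k` (with `e 0 = 0`, i.e. no `ζ₀`), and
`t` is the set of indices `m` of the exterior generators `τ̄_m` occurring
(all of which satisfy `m ≥ n + 1`). -/
structure Mono (n : ℕ) where
  e : ℕ →₀ ℕ
  t : Finset ℕ
  he : e 0 = 0
  ht : ∀ m ∈ t, n + 1 ≤ m

/-- `B p n` models `A//E(n)_* = F_p[ζ₁, ζ₂, …] ⊗ Λ(τ̄_{n+1}, …)` as the free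
`F_p`-vector space on its monomial basis. -/
abbrev B (p n : ℕ) : Type := Mono n →₀ ZMod p

namespace Mono

variable {n : ℕ}

/-- Internal (topological) degree of a monomial: `deg ζ_k = 2(p^k − 1)`,
`deg τ̄_m = 2p^m − 1`. -/
def deg (p : ℕ) (x : Mono n) : ℕ :=
  x.e.sum (fun k a => a * (2 * (p ^ k - 1))) + ∑ m ∈ x.t, (2 * p ^ m - 1)

/-- Weight of a monomial: `wt ζ_k = wt τ̄_k = p^k`, extended additively. -/
def wt (p : ℕ) (x : Mono n) : ℕ :=
  x.e.sum (fun k a => a * p ^ k) + ∑ m ∈ x.t, p ^ m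

/-- Length of a monomial: the number of exterior factors `τ̄_m` occurring in it. -/
def len (x : Mono n) : ℕ := x.t.card

end Mono

/-- The monomial obtained from `x` by the Milnor operation `Q_r` acting on the
exterior factor `τ̄_m`: remove `τ̄_m` and multiply by `ζ_{m−r}^{p^r}`
(with the convention `ζ₀ = 1`, i.e. if `m ≤ r` nothing is added). -/
noncomputable def Qtarget (p r : ℕ) {n : ℕ} (x : Mono n) (m : ℕ) : Mono n where
  e := if r < m then x.e + Finsupp.single (m - r) (p ^ r) else x.e
  t := x.t.erase m
  he := by
    by_cases h : r < m
    · simp [if_pos h, Finsupp.single_apply, x.he, Nat.sub_ne_zero_of_lt h]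
    · simp [if_neg h, x.he]
  ht := fun m' hm' => x.ht m' (Finset.mem_of_mem_erase hm')

/-- Value of the Milnor operation `Q_r` on a basis monomial: the signed sum over the
exterior factors `τ̄_m` of `x`, the sign being the Koszul sign `(−1)^{#{m' ∈ t, m' < m}}`. -/
noncomputable def Qmono (p r : ℕ) {n : ℕ} (x : Mono n) : B p n :=
  ∑ m ∈ x.t, ((-1 : ZMod p) ^ ((x.t.filter (fun m' => m' < m)).card)) •
    Finsupp.single (Qtarget p r x m) (1 : ZMod p)

/-- The Milnor operation `Q_r : B_n → B_n`, the unique graded derivation with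
`Q_r ζ_k = 0` and `Q_r τ̄_m = ζ_{m−r}^{p^r}`. -/
noncomputable def Qop (p n r : ℕ) : B p n →ₗ[ZMod p] B p n :=
  Finsupp.lsum (ZMod p) fun x => LinearMap.toSpanSingleton (ZMod p) (B p n) (Qmono p r x)

/-- The span of the set of monomials satisfying a predicate `P`. -/
noncomputable def monSpan (p n : ℕ) (P : Mono n → Prop) : Submodule (ZMod p) (B p n) :=
  Submodule.span (ZMod p) ((fun x => Finsupp.single x (1 : ZMod p)) '' {x | P x})

/-- The monomial `ζ₁^a · x` (multiplication by a power of `ζ₁`). -/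
noncomputable def shiftZ1 {n : ℕ} (a : ℕ) (x : Mono n) : Mono n where
  e := x.e + Finsupp.single 1 a
  t := x.t
  he := by simp [Finsupp.single_apply, x.he]
  ht := x.ht

/-- Multiplication by `ζ₁^a` as a linear endomorphism of `B_n`. -/
noncomputable def mulZ1 (p n a : ℕ) : B p n →ₗ[ZMod p] B p n :=
  Finsupp.lsum (ZMod p) fun x =>
    LinearMap.toSpanSingleton (ZMod p) (B p n) (Finsupp.single (shiftZ1 a x) 1)

/-- The product of two basis monomials of `B_n`: zero if they share an exterior factor,
and otherwise the merged monomial together with the Koszul sign counting the inversions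
among the (odd-degree) exterior factors. -/
noncomputable def monoMulFun (p n : ℕ) (x y : Mono n) : B p n :=
  if Disjoint x.t y.t then
    ((-1 : ZMod p) ^ (∑ m ∈ x.t, (y.t.filter (fun m' => m' < m)).card)) •
      Finsupp.single
        (⟨x.e + y.e, x.t ∪ y.t, by simp [x.he, y.he],
          fun m hm => (Finset.mem_union.mp hm).elim (x.ht m) (y.ht m)⟩ : Mono n) 1
  else 0

/-- The (graded-commutative) product of `B_n`, extended bilinearly from monomials. -/
noncomputable def Bmul (p n : ℕ) (f g : B p n) : B p n :=
  f.sum fun x c => g.sum fun y d => (c * d) • monoMulFun p n x y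

/-- The weight of the `τ̄₂`-free part of a monomial of `B₁`: writing a monomial uniquely
as `m τ̄₂^ε` with `m` not involving `τ̄₂`, this is `wt m`. -/
def Mono.wtF (p : ℕ) {n : ℕ} (x : Mono n) : ℕ :=
  x.e.sum (fun k a => a * p ^ k) + ∑ m ∈ x.t.erase 2, p ^ m

/-- The filtration `F^a B₁`: the span of the monomials `m τ̄₂^ε` with `wt m ≥ pa`. -/
noncomputable def FSub (p a : ℕ) : Submodule (ZMod p) (B p 1) := monSpan p 1 (fun x => p * a ≤ x.wtF p)

/-- The Brown–Gitler comodule `ℓ_c ⊆ B₁`: the span of the monomials of weight `≤ pc`. -/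
noncomputable def lSub (p c : ℕ) : Submodule (ZMod p) (B p 1) := monSpan p 1 (fun x => x.wt p ≤ p * c)

/-- `M₂(a)` viewed inside `B₁`: the span of the `τ̄₂`-free monomials of weight
exactly `pa`. -/
noncomputable def M2sub (p a : ℕ) : Submodule (ZMod p) (B p 1) :=
  monSpan p 1 (fun x => 2 ∉ x.t ∧ x.wt p = p * a)

/-- The composite `ψ : ℓ_{pj+i} ⊆ B₁ ↠ B₁/F^{pj}B₁` of the inclusion and the
projection. -/
noncomputable def psiMap (p j i : ℕ) :
    lSub p (p * j + i) →ₗ[ZMod p] (B p 1 ⧸ FSub p (p * j)) :=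
  (FSub p (p * j)).mkQ ∘ₗ (lSub p (p * j + i)).subtype

/-- The basis element `τ̄₂` of `B₁`. -/
noncomputable def tau2elem (p : ℕ) : B p 1 :=
  Finsupp.single (⟨0, {2}, by simp, by simp⟩ : Mono 1) 1

/-- The `τ̄₂`-free monomials `m` with `p(p(j−1)+i) < wt m ≤ p²j − p`, whose classes
`[m τ̄₂]` span the cokernel of `ψ`. -/
def genSet (p j i : ℕ) : Set (Mono 1) :=
  {m | 2 ∉ m.t ∧ p * (p * (j - 1) + i) < m.wt p ∧ m.wt p ≤ p ^ 2 * j - p}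

/-- The degree shift `φ(j,k) = q(p(j−1)+k) + 2p² − 1`, with `q = 2(p−1)`. -/
def phiShift (p j k : ℕ) : ℕ := 2 * (p - 1) * (p * (j - 1) + k) + 2 * p ^ 2 - 1

set_option maxHeartbeats 1600000

section Aux

open Finsupp

lemma Mono.ext' {n : ℕ} {x y : Mono n} (he : x.e = y.e) (ht : x.t = y.t) : x = y := by
  cases x; cases y; simp_all

lemma monSpan_eq (p n : ℕ) (P : Mono n → Prop) :
    monSpan p n P = Finsupp.supported (ZMod p) (ZMod p) {x | P x} := by
  rw [Finsupp.supported_eq_span_single]; rfl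

lemma mem_monSpan {p n : ℕ} {P : Mono n → Prop} {f : B p n} :
    f ∈ monSpan p n P ↔ ∀ x ∈ f.support, P x := by
  rw [monSpan_eq, Finsupp.mem_supported]
  exact ⟨fun h x hx => h hx, fun h x hx => h x hx⟩

lemma single_mem_monSpan {p n : ℕ} {P : Mono n → Prop} {x : Mono n} (h : P x) (c : ZMod p) :
    Finsupp.single x c ∈ monSpan p n P := by
  rw [mem_monSpan]
  intro y hy
  have := Finsupp.support_single_subset hy
  simp only [Finset.mem_singleton] at this
  rwa [this]

lemma mem_t_ne_zero {n : ℕ} (x : Mono n) {m : ℕ} (hm : m ∈ x.t) : m ≠ 0 := by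
  have := x.ht m hm; omega

lemma mem_t_ge3 {x : Mono 1} (h2 : 2 ∉ x.t) {m : ℕ} (hm : m ∈ x.t) : 3 ≤ m := by
  have := x.ht m hm
  rcases Nat.lt_or_ge m 3 with h | h
  · interval_cases m <;> simp_all
  · exact h

lemma dvd_wt {p n : ℕ} (x : Mono n) : p ∣ x.wt p := by
  unfold Mono.wt
  apply dvd_add
  · rw [Finsupp.sum]
    apply Finset.dvd_sum
    intro k hk
    have hk0 : k ≠ 0 := by
      intro h; exact (Finsupp.mem_support_iff.mp hk) (h ▸ x.he)
    exact Dvd.dvd.mul_left (dvd_pow_self p hk0) _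
  · apply Finset.dvd_sum
    intro m hm
    exact dvd_pow_self p (mem_t_ne_zero x hm)

lemma dvd_wtF {p n : ℕ} (x : Mono n) : p ∣ x.wtF p := by
  unfold Mono.wtF
  apply dvd_add
  · rw [Finsupp.sum]
    apply Finset.dvd_sum
    intro k hk
    have hk0 : k ≠ 0 := by
      intro h; exact (Finsupp.mem_support_iff.mp hk) (h ▸ x.he)
    exact Dvd.dvd.mul_left (dvd_pow_self p hk0) _
  · apply Finset.dvd_sum
    intro m hm
    exact dvd_pow_self p (mem_t_ne_zero x (Finset.mem_of_mem_erase hm))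

lemma wt_eq_wtF_add {p n : ℕ} (x : Mono n) :
    x.wt p = x.wtF p + (if 2 ∈ x.t then p ^ 2 else 0) := by
  unfold Mono.wt Mono.wtF
  by_cases h : 2 ∈ x.t
  · rw [if_pos h, ← Finset.add_sum_erase _ _ h]
    ring
  · rw [if_neg h, Finset.erase_eq_of_notMem h, add_zero]

lemma wtF_eq_wt {p n : ℕ} {x : Mono n} (h : 2 ∉ x.t) : x.wtF p = x.wt p := by
  have := wt_eq_wtF_add (p := p) x
  rw [if_neg h, add_zero] at this
  omega

lemma Qop_single {p n r : ℕ} (x : Mono n) (c : ZMod p) :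
    Qop p n r (Finsupp.single x c) = c • Qmono p r x := by
  unfold Qop
  rw [Finsupp.lsum_single, LinearMap.toSpanSingleton_apply]

lemma Bmul_single_single {p n : ℕ} (x y : Mono n) (c d : ZMod p) :
    Bmul p n (Finsupp.single x c) (Finsupp.single y d) = (c * d) • monoMulFun p n x y := by
  unfold Bmul
  rw [Finsupp.sum_single_index (by simp), Finsupp.sum_single_index (by simp)]

lemma Bmul_eq_lsum (p n : ℕ) (g f : B p n) :
    Bmul p n f g =
      Finsupp.lsum (ZMod p) (fun x => LinearMap.toSpanSingleton (ZMod p) (B p n)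
        (g.sum fun y d => d • monoMulFun p n x y)) f := by
  rw [Finsupp.lsum_apply]
  unfold Bmul
  apply Finsupp.sum_congr
  intro x _
  rw [LinearMap.toSpanSingleton_apply, Finsupp.smul_sum]
  apply Finsupp.sum_congr
  intro y _
  rw [smul_smul]

/-- `τ̄₂` as a monomial. -/
def t2m : Mono 1 := ⟨0, {2}, by simp, by simp⟩

lemma tau2elem_eq (p : ℕ) : tau2elem p = Finsupp.single t2m 1 := rfl

/-- The monomial `x · τ̄₂`. -/
def addT2 (x : Mono 1) : Mono 1 where
  e := x.e
  t := insert 2 x.t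
  he := x.he
  ht := fun m hm => by
    rcases Finset.mem_insert.mp hm with h | h
    · omega
    · exact x.ht m h

lemma monoMulFun_t2 {p : ℕ} (x : Mono 1) (h2 : 2 ∉ x.t) :
    monoMulFun p 1 x t2m = ((-1 : ZMod p) ^ x.t.card) • Finsupp.single (addT2 x) 1 := by
  unfold monoMulFun
  rw [if_pos (by simpa [t2m] using h2)]
  congr 1
  · congr 1
    rw [Finset.card_eq_sum_ones]
    apply Finset.sum_congr rfl
    intro m hm
    have h3 := mem_t_ge3 h2 hm
    show (Finset.filter (fun m' => m' < m) ({2} : Finset ℕ)).card = 1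
    rw [Finset.filter_singleton, if_pos (by omega), Finset.card_singleton]
  · congr 1
    apply Mono.ext'
    · show x.e + t2m.e = (addT2 x).e
      simp [t2m, addT2]
    · show x.t ∪ t2m.t = (addT2 x).t
      show x.t ∪ {2} = insert 2 x.t
      rw [Finset.insert_eq, Finset.union_comm]

lemma Bmul_single_t2 {p : ℕ} (x : Mono 1) (h2 : 2 ∉ x.t) :
    Bmul p 1 (Finsupp.single x 1) (tau2elem p)
      = ((-1 : ZMod p) ^ x.t.card) • Finsupp.single (addT2 x) 1 := by
  rw [tau2elem_eq, Bmul_single_single, one_mul, monoMulFun_t2 x h2, one_smul]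

lemma wt_addT2 {p : ℕ} (x : Mono 1) (h2 : 2 ∉ x.t) :
    (addT2 x).wt p = x.wt p + p ^ 2 := by
  unfold Mono.wt
  show x.e.sum _ + ∑ m ∈ insert 2 x.t, p ^ m = _
  rw [Finset.sum_insert h2]
  ring

lemma wtF_addT2 {p : ℕ} (x : Mono 1) (h2 : 2 ∉ x.t) :
    (addT2 x).wtF p = x.wt p := by
  unfold Mono.wtF Mono.wt
  show x.e.sum _ + ∑ m ∈ (insert 2 x.t).erase 2, p ^ m = _
  rw [Finset.erase_insert h2]

end Aux
section UpDown

open Finsupp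

/-- Downshift: delete `τ̄₂` and the `ζ₁`-power, and shift all indices down by one. -/
noncomputable def downM (y : Mono 1) : Mono 1 where
  e := (Finsupp.comapDomain (· + 1) y.e (fun a _ b _ h => by simpa using h)).erase 0
  t := (y.t.erase 2).image (· - 1)
  he := by simp
  ht := fun m hm => by
    obtain ⟨a, ha, rfl⟩ := Finset.mem_image.mp hm
    have h1 := y.ht a (Finset.mem_of_mem_erase ha)
    have h2 : a ≠ 2 := Finset.ne_of_mem_erase ha
    omega

lemma downM_e_apply (y : Mono 1) {k : ℕ} (hk : k ≠ 0) : (downM y).e k = y.e (k + 1) := by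
  show ((Finsupp.comapDomain (· + 1) y.e _).erase 0) k = _
  rw [Finsupp.erase_ne hk]
  exact Finsupp.comapDomain_apply _ _ _ _

lemma downM_t (y : Mono 1) : (downM y).t = (y.t.erase 2).image (· - 1) := rfl

lemma two_notin_image (u : Mono 1) : 2 ∉ u.t.image (· + 1) := by
  intro h
  obtain ⟨b, hb, hb2⟩ := Finset.mem_image.mp h
  have := u.ht b hb
  omega

/-- Upshift: shift all indices up by one, multiply by `ζ₁^a` and `τ̄₂`. -/
noncomputable def upM (a : ℕ) (u : Mono 1) : Mono 1 where
  e := Finsupp.mapDomain (· + 1) u.e + Finsupp.single 1 a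
  t := insert 2 (u.t.image (· + 1))
  he := by
    rw [Finsupp.add_apply, Finsupp.mapDomain_notin_range]
    · simp
    · simp
  ht := fun m hm => by
    rcases Finset.mem_insert.mp hm with h | h
    · omega
    · obtain ⟨b, hb, rfl⟩ := Finset.mem_image.mp h
      have := u.ht b hb
      omega

lemma upM_e (a : ℕ) (u : Mono 1) :
    (upM a u).e = Finsupp.mapDomain (· + 1) u.e + Finsupp.single 1 a := rfl

lemma upM_t (a : ℕ) (u : Mono 1) : (upM a u).t = insert 2 (u.t.image (· + 1)) := rfl

lemma two_mem_upM (a : ℕ) (u : Mono 1) : 2 ∈ (upM a u).t := Finset.mem_insert_self _ _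

lemma upM_t_card (a : ℕ) (u : Mono 1) : (upM a u).t.card = u.t.card + 1 := by
  rw [upM_t, Finset.card_insert_of_notMem (two_notin_image u),
    Finset.card_image_of_injective _ (fun x y h => by simpa using h)]

lemma downM_t_card {y : Mono 1} (h2 : 2 ∈ y.t) : (downM y).t.card = y.t.card - 1 := by
  rw [downM_t, Finset.card_image_of_injOn, Finset.card_erase_of_mem h2]
  intro a ha b hb h
  have h' : a - 1 = b - 1 := h
  have ha2 : a ≠ 2 := Finset.ne_of_mem_erase ha
  have hb2 : b ≠ 2 := Finset.ne_of_mem_erase hb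
  have ha3 := y.ht a (Finset.mem_of_mem_erase ha)
  have hb3 := y.ht b (Finset.mem_of_mem_erase hb)
  omega

lemma downM_upM (a : ℕ) (u : Mono 1) : downM (upM a u) = u := by
  apply Mono.ext'
  · ext k
    match k with
    | 0 =>
      rw [u.he]
      show ((Finsupp.comapDomain (· + 1) (upM a u).e _).erase 0) 0 = 0
      simp
    | Nat.succ k' =>
      rw [downM_e_apply _ (by omega), upM_e, Finsupp.add_apply]
      have h1 : (Finsupp.mapDomain (· + 1) u.e) (k' + 1 + 1) = u.e (k' + 1) :=
        Finsupp.mapDomain_apply (fun x y h => by simpa using h) u.e (k' + 1)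
      rw [h1, Finsupp.single_apply, if_neg (by omega), add_zero]
  · rw [downM_t, upM_t, Finset.erase_insert (two_notin_image u), Finset.image_image]
    rw [show ((fun m => m - 1) ∘ fun m => m + 1) = id from funext fun b => by simp]
    exact Finset.image_id

lemma upM_downM {y : Mono 1} (h2 : 2 ∈ y.t) : upM (y.e 1) (downM y) = y := by
  apply Mono.ext'
  · ext k
    rw [upM_e, Finsupp.add_apply]
    match k with
    | 0 =>
      rw [y.he, Finsupp.mapDomain_notin_range _ _ (by simp), Finsupp.single_apply,
        if_neg (by omega)]
      simp
    | 1 =>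
      have h1 : (Finsupp.mapDomain (· + 1) (downM y).e) 1 = (downM y).e 0 := by
        simpa using Finsupp.mapDomain_apply (fun x y h => by simpa using h) (downM y).e 0
      rw [h1, (downM y).he, Finsupp.single_apply]
      simp
    | Nat.succ (Nat.succ k') =>
      have h1 : (Finsupp.mapDomain (· + 1) (downM y).e) (k' + 1 + 1) = (downM y).e (k' + 1) :=
        Finsupp.mapDomain_apply (fun x y h => by simpa using h) _ (k' + 1)
      rw [h1, downM_e_apply _ (by omega), Finsupp.single_apply, if_neg (by omega), add_zero]
  · rw [upM_t, downM_t, Finset.image_image]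
    have : (y.t.erase 2).image ((fun m => m + 1) ∘ fun m => m - 1) = (y.t.erase 2).image id := by
      apply Finset.image_congr
      intro b hb
      have hb2 : b ≠ 2 := Finset.ne_of_mem_erase hb
      have hb3 := y.ht b (Finset.mem_of_mem_erase hb)
      simp only [Function.comp_apply, id]
      omega
    rw [this, Finset.image_id, Finset.insert_erase h2]

lemma wt_upM (p a : ℕ) (u : Mono 1) :
    (upM a u).wt p = p * a + p ^ 2 + p * u.wt p := by
  unfold Mono.wt
  rw [upM_e, upM_t]
  rw [Finsupp.sum_add_index' (by simp) (fun i b₁ b₂ => add_mul b₁ b₂ _)]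
  rw [Finsupp.sum_mapDomain_index (by simp) (fun i b₁ b₂ => add_mul b₁ b₂ _)]
  rw [Finsupp.sum_single_index (by simp)]
  rw [Finset.sum_insert (two_notin_image u), Finset.sum_image (fun x _ y _ h => by simpa using h)]
  have h1 : u.e.sum (fun k c => c * p ^ (k + 1)) = p * u.e.sum (fun k c => c * p ^ k) := by
    rw [Finsupp.sum, Finsupp.sum, Finset.mul_sum]
    exact Finset.sum_congr rfl fun k _ => by ring
  have h2 : ∑ b ∈ u.t, p ^ (b + 1) = p * ∑ b ∈ u.t, p ^ b := by
    rw [Finset.mul_sum]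
    exact Finset.sum_congr rfl fun b _ => by ring
  rw [h1, h2]
  ring

lemma wtF_upM (p a : ℕ) (u : Mono 1) :
    (upM a u).wtF p = p * a + p * u.wt p := by
  have h1 := wt_eq_wtF_add (p := p) (upM a u)
  rw [if_pos (two_mem_upM a u)] at h1
  have h2 := wt_upM p a u
  omega

/-- Total exponent count of the polynomial part. -/
def Se {n : ℕ} (x : Mono n) : ℕ := x.e.sum fun _ c => c

lemma Se_upM (a : ℕ) (u : Mono 1) : Se (upM a u) = a + Se u := by
  unfold Se
  rw [upM_e]
  rw [Finsupp.sum_add_index' (by simp) (by intros; rfl)]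
  rw [Finsupp.sum_mapDomain_index (by simp) (by intros; rfl)]
  rw [Finsupp.sum_single_index (by simp)]
  ring

lemma deg_key {p n : ℕ} (hp : 1 ≤ p) (x : Mono n) :
    x.deg p + (2 * Se x + x.t.card) = 2 * x.wt p := by
  unfold Mono.deg Mono.wt Se
  rw [Finsupp.sum, Finsupp.sum, Finsupp.sum, Finset.card_eq_sum_ones, Nat.mul_add,
    Finset.mul_sum, Finset.mul_sum, Finset.mul_sum]
  have e1 : ∑ k ∈ x.e.support, x.e k * (2 * (p ^ k - 1)) + ∑ k ∈ x.e.support, 2 * x.e k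
      = ∑ k ∈ x.e.support, 2 * (x.e k * p ^ k) := by
    rw [← Finset.sum_add_distrib]
    apply Finset.sum_congr rfl
    intro k _
    have hq : 1 ≤ p ^ k := Nat.one_le_pow _ _ (by omega)
    obtain ⟨q', hq'⟩ : ∃ q', p ^ k = q' + 1 := ⟨p ^ k - 1, by omega⟩
    rw [hq', show q' + 1 - 1 = q' from rfl]
    ring
  have e2 : ∑ m ∈ x.t, (2 * p ^ m - 1) + ∑ m ∈ x.t, 1 = ∑ m ∈ x.t, 2 * p ^ m := by
    rw [← Finset.sum_add_distrib]
    apply Finset.sum_congr rfl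
    intro m _
    have hq : 1 ≤ p ^ m := Nat.one_le_pow _ _ (by omega)
    omega
  omega

lemma deg_upM_phi {p : ℕ} (hp : 1 ≤ p) (a : ℕ) (u : Mono 1) {N : ℕ}
    (hN : a + u.wt p = N) :
    (upM a u).deg p + 1 = u.deg p + (2 * (p - 1) * N + 2 * p ^ 2) := by
  have h1 := deg_key hp (upM a u)
  have h2 := deg_key hp u
  have h3 := wt_upM p a u
  have h4 := Se_upM a u
  have h5 := upM_t_card a u
  subst hN
  zify [hp] at h1 h2 h3 h4 h5 ⊢
  have hy : 2 * ((p : ℤ) - 1) * ((a : ℤ) + (u.wt p : ℤ))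
      = 2 * (p : ℤ) * (a : ℤ) + 2 * (p : ℤ) * (u.wt p : ℤ)
        - 2 * (a : ℤ) - 2 * (u.wt p : ℤ) := by ring
  have hx : 2 * ((p : ℤ) * a + (p : ℤ) ^ 2 + (p : ℤ) * u.wt p)
      = 2 * (p : ℤ) * a + 2 * (p : ℤ) ^ 2 + 2 * (p : ℤ) * u.wt p := by ring
  push_cast at hy ⊢
  linarith

end UpDown
section QtargetLemmas

open Finsupp

lemma Qtarget_e_lt {p r n : ℕ} (x : Mono n) {m : ℕ} (h : r < m) :
    (Qtarget p r x m).e = x.e + Finsupp.single (m - r) (p ^ r) := by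
  show (if r < m then _ else _) = _
  rw [if_pos h]

lemma Qtarget_e_ge {p r n : ℕ} (x : Mono n) {m : ℕ} (h : ¬ r < m) :
    (Qtarget p r x m).e = x.e := by
  show (if r < m then _ else _) = _
  rw [if_neg h]

lemma Qtarget_t {p r n : ℕ} (x : Mono n) (m : ℕ) : (Qtarget p r x m).t = x.t.erase m := rfl

lemma esum_add_single {p : ℕ} (e : ℕ →₀ ℕ) (a b : ℕ) :
    (e + Finsupp.single a b).sum (fun k c => c * p ^ k) =
      e.sum (fun k c => c * p ^ k) + b * p ^ a := by
  rw [Finsupp.sum_add_index' (by simp) (fun i b₁ b₂ => add_mul b₁ b₂ _),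
    Finsupp.sum_single_index (by simp)]

lemma wt_Qtarget {p n r : ℕ} (x : Mono n) {m : ℕ} (hm : m ∈ x.t) (h : r < m) :
    (Qtarget p r x m).wt p = x.wt p := by
  unfold Mono.wt
  rw [Qtarget_e_lt x h, Qtarget_t, esum_add_single]
  have hp : p ^ r * p ^ (m - r) = p ^ m := by rw [← pow_add]; congr 1; omega
  have h2 := Finset.add_sum_erase x.t (fun m => p ^ m) hm
  beta_reduce at h2
  have h3 : p ^ r * p ^ (m - r) = p ^ (m - r) * p ^ r := by ring
  omega

lemma wtF_Qtarget {p r : ℕ} (y : Mono 1) {m' : ℕ} (hm : m' ∈ y.t) (h3 : 3 ≤ m')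
    (hr : r ≤ 2) : (Qtarget p r y m').wtF p = y.wtF p := by
  unfold Mono.wtF
  rw [Qtarget_e_lt y (by omega), Qtarget_t, esum_add_single]
  have hp : p ^ r * p ^ (m' - r) = p ^ m' := by rw [← pow_add]; congr 1; omega
  have hm2 : m' ∈ y.t.erase 2 := Finset.mem_erase.mpr ⟨by omega, hm⟩
  have h2 := Finset.add_sum_erase (y.t.erase 2) (fun m => p ^ m) hm2
  beta_reduce at h2
  have h5 : (y.t.erase m').erase 2 = (y.t.erase 2).erase m' := by
    ext b
    simp only [Finset.mem_erase]
    tauto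
  rw [h5]
  have h4 : p ^ (m' - r) * p ^ r = p ^ r * p ^ (m' - r) := by ring
  omega

lemma two_mem_Qtarget_t {p r : ℕ} (y : Mono 1) {m' : ℕ} (h3 : 3 ≤ m') :
    (2 ∈ (Qtarget p r y m').t) ↔ 2 ∈ y.t := by
  rw [Qtarget_t, Finset.mem_erase]
  exact ⟨fun h => h.2, fun h => ⟨by omega, h⟩⟩

lemma Qtarget_addT2_two_t {p r : ℕ} (m : Mono 1) (h2 : 2 ∉ m.t) :
    (Qtarget p r (addT2 m) 2).t = m.t := by
  rw [Qtarget_t]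
  show (insert 2 m.t).erase 2 = m.t
  rw [Finset.erase_insert h2]

lemma Qtarget_addT2_two_notmem {p r : ℕ} (m : Mono 1) (h2 : 2 ∉ m.t) :
    2 ∉ (Qtarget p r (addT2 m) 2).t := by
  rw [Qtarget_addT2_two_t m h2]; exact h2

lemma wt_Qtarget_addT2_two {p r : ℕ} (m : Mono 1) (h2 : 2 ∉ m.t) (hr : r < 2) :
    (Qtarget p r (addT2 m) 2).wt p = m.wt p + p ^ 2 := by
  unfold Mono.wt
  rw [Qtarget_e_lt _ hr, Qtarget_addT2_two_t m h2]
  show ((addT2 m).e + _).sum _ + _ = _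
  rw [show (addT2 m).e = m.e from rfl, esum_add_single]
  have hp : p ^ r * p ^ (2 - r) = p ^ 2 := by rw [← pow_add]; congr 1; omega
  have h4 : p ^ (2 - r) * p ^ r = p ^ r * p ^ (2 - r) := by ring
  omega

lemma Qtarget_addT2_two_eq {p : ℕ} (m : Mono 1) (h2 : 2 ∉ m.t) :
    Qtarget p 2 (addT2 m) 2 = m := by
  apply Mono.ext'
  · rw [Qtarget_e_ge _ (by omega)]; rfl
  · exact Qtarget_addT2_two_t m h2

lemma addT2_Qtarget {p r : ℕ} (m : Mono 1) {m' : ℕ} (h3 : 3 ≤ m') (hr : r ≤ 2) :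
    addT2 (Qtarget p r m m') = Qtarget p r (addT2 m) m' := by
  apply Mono.ext'
  · show (Qtarget p r m m').e = _
    rw [Qtarget_e_lt m (by omega), Qtarget_e_lt (addT2 m) (by omega)]
    rfl
  · show insert 2 (m.t.erase m') = (insert 2 m.t).erase m'
    rw [Finset.erase_insert_of_ne (by omega : (2 : ℕ) ≠ m')]

lemma filter_insert_two {m' : ℕ} (t : Finset ℕ) (h2 : 2 ∉ t) (h3 : 3 ≤ m') :
    ((insert 2 t).filter (fun a => a < m')).card = (t.filter (fun a => a < m')).card + 1 := by
  rw [Finset.filter_insert, if_pos (by omega : 2 < m'),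
    Finset.card_insert_of_notMem (fun h => h2 (Finset.mem_of_mem_filter _ h))]

/-- Key derivation computation for Statement 18 part 3. -/
lemma Qop_Bmul_tau2 {p : ℕ} (r : ℕ) (hr : r ≤ 2) (m : Mono 1) (h2 : 2 ∉ m.t) :
    Qop p 1 r (Bmul p 1 (Finsupp.single m 1) (tau2elem p)) -
      Bmul p 1 (Qop p 1 r (Finsupp.single m 1)) (tau2elem p)
    = ((-1 : ZMod p) ^ m.t.card) • Finsupp.single (Qtarget p r (addT2 m) 2) 1 := by
  rw [Bmul_single_t2 m h2, map_smul, Qop_single, Qop_single, one_smul, one_smul]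
  unfold Qmono
  rw [show (addT2 m).t = insert 2 m.t from rfl, Finset.sum_insert h2]
  have hs2 : ((insert 2 m.t).filter (fun m'' => m'' < 2)).card = 0 := by
    rw [Finset.card_eq_zero, Finset.filter_eq_empty_iff]
    intro a ha
    rcases Finset.mem_insert.mp ha with h | h
    · omega
    · have := mem_t_ge3 h2 h
      omega
  rw [hs2, pow_zero, one_smul]
  rw [Bmul_eq_lsum, map_sum]
  have hterm : ∀ m' ∈ m.t,
      (Finsupp.lsum (ZMod p) fun x => LinearMap.toSpanSingleton (ZMod p) (B p 1)
          ((tau2elem p).sum fun y d => d • monoMulFun p 1 x y))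
        (((-1 : ZMod p) ^ ((m.t.filter (fun m'' => m'' < m')).card)) •
          Finsupp.single (Qtarget p r m m') (1 : ZMod p))
      = ((-1 : ZMod p) ^ m.t.card) •
          (((-1 : ZMod p) ^ (((insert 2 m.t).filter (fun m'' => m'' < m')).card)) •
            Finsupp.single (Qtarget p r (addT2 m) m') (1 : ZMod p)) := by
    intro m' hm'
    have h3 := mem_t_ge3 h2 hm'
    rw [map_smul, ← Bmul_eq_lsum, Bmul_single_t2 _ (fun h => h2 (Finset.mem_of_mem_erase h)),
      addT2_Qtarget m h3 hr]
    rw [Qtarget_t, Finset.card_erase_of_mem hm', smul_smul, smul_smul]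
    congr 1
    rw [filter_insert_two m.t h2 h3]
    have hT : m.t.card = (m.t.card - 1) + 1 := by
      have := Finset.card_ne_zero_of_mem hm'
      omega
    rw [hT, show m.t.card - 1 + 1 - 1 = m.t.card - 1 from rfl]
    rw [pow_succ, pow_succ]
    ring
  rw [Finset.sum_congr rfl hterm, ← Finset.smul_sum, smul_add]
  abel

end QtargetLemmas
section Phi

open Finsupp

lemma pj_eq (p j : ℕ) (hj : 1 ≤ j) : p * j = p * (j - 1) + p := by
  have h : j - 1 + 1 = j := by omega
  calc p * j = p * (j - 1 + 1) := by rw [h]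
    _ = p * (j - 1) + p := by ring

lemma arith2 (p j k : ℕ) (hj : 1 ≤ j) : p * (p * (j - 1) + k) + p ^ 2 = p ^ 2 * j + p * k := by
  have h : j - 1 + 1 = j := by omega
  calc p * (p * (j - 1) + k) + p ^ 2 = p ^ 2 * (j - 1 + 1) + p * k := by ring
    _ = p ^ 2 * j + p * k := by rw [h]

lemma wtF_decomp {p : ℕ} {y : Mono 1} (h2 : 2 ∈ y.t) :
    y.wtF p = p * (y.e 1 + (downM y).wt p) := by
  conv_lhs => rw [← upM_downM h2]
  rw [wtF_upM]
  ring

lemma wt_decomp {p : ℕ} {y : Mono 1} (h2 : 2 ∈ y.t) :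
    y.wt p = p * (y.e 1) + p ^ 2 + p * (downM y).wt p := by
  conv_lhs => rw [← upM_downM h2]
  rw [wt_upM]

lemma cond_cancel {p j : ℕ} (hp2 : 2 ≤ p) {y : Mono 1} {k : ℕ} (h2 : 2 ∈ y.t)
    (hw : y.wtF p = p * (p * (j - 1) + k)) :
    p * (j - 1) + k = y.e 1 + (downM y).wt p := by
  have hd := wtF_decomp (p := p) h2
  apply Nat.eq_of_mul_eq_mul_left (show 0 < p by omega)
  rw [← hw, hd]

lemma down_wt_le (p j : ℕ) (hp2 : 2 ≤ p) (hj : 1 ≤ j) {y : Mono 1} {k : ℕ}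
    (hk : k ≤ p - 1) (h2 : 2 ∈ y.t) (hw : y.wtF p = p * (p * (j - 1) + k)) :
    (downM y).wt p ≤ p * (j - 1) := by
  have hcan := cond_cancel hp2 h2 hw
  obtain ⟨s, hs⟩ := dvd_wt (p := p) (downM y)
  by_contra hgt
  push_neg at hgt
  have hs1 : j - 1 < s := by
    by_contra hle
    push_neg at hle
    have := Nat.mul_le_mul_left p hle
    linarith
  have hs2 : j ≤ s := by omega
  have h3 : p * j ≤ p * s := Nat.mul_le_mul_left p hs2
  have hpj := pj_eq p j hj
  have hp1 : p - 1 + 1 = p := by omega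
  linarith

/-- Component function of the cokernel isomorphism on basis monomials. -/
noncomputable def phiFun (p j i : ℕ) (hp2 : 2 ≤ p) (hj : 1 ≤ j) (y : Mono 1)
    (k : Set.Icc (i + 1) (p - 1)) : ↥(lSub p (j - 1)) :=
  if h : 2 ∈ y.t ∧ y.wtF p = p * (p * (j - 1) + (k : ℕ)) then
    ((-1 : ZMod p) ^ y.t.card) • ⟨Finsupp.single (downM y) 1,
      single_mem_monSpan
        (down_wt_le p j hp2 hj (Set.mem_Icc.mp k.2).2 h.1 h.2) 1⟩
  else 0

/-- The linear map `B₁ → ⊕_k Σ^{φ(j,k)} ℓ_{j−1}` underlying the cokernel isomorphism. -/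
noncomputable def PhiL (p j i : ℕ) (hp2 : 2 ≤ p) (hj : 1 ≤ j) :
    B p 1 →ₗ[ZMod p] (Set.Icc (i + 1) (p - 1) → ↥(lSub p (j - 1))) :=
  Finsupp.lsum (ZMod p) fun y =>
    LinearMap.toSpanSingleton (ZMod p) _ (phiFun p j i hp2 hj y)

lemma PhiL_single (p j i : ℕ) (hp2 : 2 ≤ p) (hj : 1 ≤ j) (y : Mono 1) (c : ZMod p) :
    PhiL p j i hp2 hj (Finsupp.single y c) = c • phiFun p j i hp2 hj y := by
  unfold PhiL
  rw [Finsupp.lsum_single, LinearMap.toSpanSingleton_apply]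

lemma phiFun_zero_F (p j i : ℕ) (hp2 : 2 ≤ p) (hj : 1 ≤ j) {y : Mono 1}
    (hy : p * (p * j) ≤ y.wtF p) : phiFun p j i hp2 hj y = 0 := by
  funext k
  rw [Pi.zero_apply]
  unfold phiFun
  apply dif_neg
  rintro ⟨h2, hw⟩
  have hk := (Set.mem_Icc.mp k.2).2
  have hpj := pj_eq p j hj
  have hp1 : p - 1 + 1 = p := by omega
  have h1 : p * (j - 1) + (k : ℕ) + 1 ≤ p * j := by linarith
  have h2' : p * (p * (j - 1) + (k : ℕ) + 1) ≤ p * (p * j) := Nat.mul_le_mul_left p h1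
  have h3 : p * (p * (j - 1) + (k : ℕ) + 1) = p * (p * (j - 1) + (k : ℕ)) + p := by ring
  linarith

lemma phiFun_zero_l (p j i : ℕ) (hp2 : 2 ≤ p) (hj : 1 ≤ j) {y : Mono 1}
    (hy : y.wt p ≤ p * (p * j + i)) : phiFun p j i hp2 hj y = 0 := by
  funext k
  rw [Pi.zero_apply]
  unfold phiFun
  apply dif_neg
  rintro ⟨h2, hw⟩
  have hk := (Set.mem_Icc.mp k.2).1
  have hWt := wt_eq_wtF_add (p := p) y
  rw [if_pos h2] at hWt
  have ha := arith2 p j (k : ℕ) hj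
  have hki : p * (i + 1) ≤ p * (k : ℕ) := Nat.mul_le_mul_left p hk
  have h1 : p * (p * j + i) = p ^ 2 * j + p * i := by ring
  have h2' : p * (i + 1) = p * i + p := by ring
  linarith

lemma PhiL_zero_of_supp (p j i : ℕ) (hp2 : 2 ≤ p) (hj : 1 ≤ j) {f : B p 1}
    (h : ∀ y ∈ f.support, phiFun p j i hp2 hj y = 0) : PhiL p j i hp2 hj f = 0 := by
  unfold PhiL
  rw [Finsupp.lsum_apply, Finsupp.sum]
  apply Finset.sum_eq_zero
  intro y hy
  show LinearMap.toSpanSingleton (ZMod p) _ (phiFun p j i hp2 hj y) (f y) = 0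
  rw [LinearMap.toSpanSingleton_apply, h y hy, smul_zero]

lemma PhiL_vanish_F (p j i : ℕ) (hp2 : 2 ≤ p) (hj : 1 ≤ j) {f : B p 1}
    (hf : f ∈ FSub p (p * j)) : PhiL p j i hp2 hj f = 0 := by
  apply PhiL_zero_of_supp
  intro y hy
  exact phiFun_zero_F p j i hp2 hj (mem_monSpan.mp hf y hy)

lemma PhiL_vanish_l (p j i : ℕ) (hp2 : 2 ≤ p) (hj : 1 ≤ j) {f : B p 1}
    (hf : f ∈ lSub p (p * j + i)) : PhiL p j i hp2 hj f = 0 := by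
  apply PhiL_zero_of_supp
  intro y hy
  exact phiFun_zero_l p j i hp2 hj (mem_monSpan.mp hf y hy)

/-- `PhiL` descended to `B₁/F^{pj}B₁`. -/
lemma PhiL_ker (p j i : ℕ) (hp2 : 2 ≤ p) (hj : 1 ≤ j) :
    FSub p (p * j) ≤ LinearMap.ker (PhiL p j i hp2 hj) :=
  fun f hf => LinearMap.mem_ker.mpr (PhiL_vanish_F p j i hp2 hj hf)

noncomputable def Phi1 (p j i : ℕ) (hp2 : 2 ≤ p) (hj : 1 ≤ j) :
    (B p 1 ⧸ FSub p (p * j)) →ₗ[ZMod p]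
      (Set.Icc (i + 1) (p - 1) → ↥(lSub p (j - 1))) :=
  Submodule.liftQ (M₂ := Set.Icc (i + 1) (p - 1) → ↥(lSub p (j - 1)))
    (FSub p (p * j)) (PhiL p j i hp2 hj) (PhiL_ker p j i hp2 hj)

lemma Phi1_mk (p j i : ℕ) (hp2 : 2 ≤ p) (hj : 1 ≤ j) (w : B p 1) :
    Phi1 p j i hp2 hj (Submodule.Quotient.mk w) = PhiL p j i hp2 hj w := by
  unfold Phi1
  exact Submodule.liftQ_apply _ _ _

lemma Phi1_vanish (p j i : ℕ) (hp2 : 2 ≤ p) (hj : 1 ≤ j) :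
    LinearMap.range (psiMap p j i) ≤ LinearMap.ker (Phi1 p j i hp2 hj) := by
  intro v hv
  obtain ⟨x, rfl⟩ := LinearMap.mem_range.mp hv
  rw [LinearMap.mem_ker,
    show psiMap p j i x
      = Submodule.Quotient.mk ((lSub p (p * j + i)).subtype x) from rfl,
    Phi1_mk]
  exact PhiL_vanish_l p j i hp2 hj x.2

/-- `PhiL` descended to the double quotient (the cokernel of `ψ`). -/
noncomputable def Phi2 (p j i : ℕ) (hp2 : 2 ≤ p) (hj : 1 ≤ j) :
    ((B p 1 ⧸ FSub p (p * j)) ⧸ LinearMap.range (psiMap p j i)) →ₗ[ZMod p]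
      (Set.Icc (i + 1) (p - 1) → ↥(lSub p (j - 1))) :=
  Submodule.liftQ (M₂ := Set.Icc (i + 1) (p - 1) → ↥(lSub p (j - 1)))
    (LinearMap.range (psiMap p j i)) (Phi1 p j i hp2 hj)
    (Phi1_vanish p j i hp2 hj)

lemma Phi2_mk (p j i : ℕ) (hp2 : 2 ≤ p) (hj : 1 ≤ j) (w : B p 1) :
    Phi2 p j i hp2 hj (Submodule.Quotient.mk (Submodule.Quotient.mk w))
      = PhiL p j i hp2 hj w := by
  unfold Phi2
  rw [Submodule.liftQ_apply]
  exact Phi1_mk p j i hp2 hj w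

/-- Multiplication by the appropriate power of `ζ₁` times upshift, slot `kv`. -/
noncomputable def upL (p j kv : ℕ) : B p 1 →ₗ[ZMod p] B p 1 :=
  Finsupp.lsum (ZMod p) fun u =>
    LinearMap.toSpanSingleton (ZMod p) _
      (((-1 : ZMod p) ^ (u.t.card + 1)) •
        Finsupp.single (upM (p * (j - 1) + kv - u.wt p) u) 1)

lemma upL_single (p j kv : ℕ) (u : Mono 1) (c : ZMod p) :
    upL p j kv (Finsupp.single u c)
      = c • (((-1 : ZMod p) ^ (u.t.card + 1)) •
          Finsupp.single (upM (p * (j - 1) + kv - u.wt p) u) 1) := by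
  unfold upL
  rw [Finsupp.lsum_single, LinearMap.toSpanSingleton_apply]

/-- The inverse map of the cokernel isomorphism. -/
noncomputable def PsiL (p j i : ℕ) :
    (Set.Icc (i + 1) (p - 1) → ↥(lSub p (j - 1))) →ₗ[ZMod p]
      ((B p 1 ⧸ FSub p (p * j)) ⧸ LinearMap.range (psiMap p j i)) :=
  ∑ k : Set.Icc (i + 1) (p - 1),
    (LinearMap.range (psiMap p j i)).mkQ ∘ₗ (FSub p (p * j)).mkQ ∘ₗ upL p j (k : ℕ)
      ∘ₗ (lSub p (j - 1)).subtype ∘ₗ LinearMap.proj k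

lemma PsiL_apply (p j i : ℕ) (g : Set.Icc (i + 1) (p - 1) → ↥(lSub p (j - 1))) :
    PsiL p j i g = ∑ k : Set.Icc (i + 1) (p - 1),
      (LinearMap.range (psiMap p j i)).mkQ ((FSub p (p * j)).mkQ
        (upL p j (k : ℕ) ((g k) : B p 1))) := by
  unfold PsiL
  rw [LinearMap.sum_apply]
  rfl

end Phi
section Main

open Finsupp

lemma neg_one_sq_pow (p : ℕ) (c : ℕ) : ((-1 : ZMod p) ^ c) * ((-1 : ZMod p) ^ c) = 1 := by
  rw [← pow_add, show c + c = 2 * c from by ring, pow_mul]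
  simp

lemma PsiL_PhiL_single (p j i : ℕ) (hp2 : 2 ≤ p) (hj : 1 ≤ j) (y : Mono 1) :
    PsiL p j i (PhiL p j i hp2 hj (Finsupp.single y 1))
      = Submodule.Quotient.mk (Submodule.Quotient.mk (Finsupp.single y 1)) := by
  rw [PhiL_single, one_smul, PsiL_apply]
  by_cases hc : 2 ∈ y.t ∧ ∃ k : Set.Icc (i + 1) (p - 1),
      y.wtF p = p * (p * (j - 1) + (k : ℕ))
  · obtain ⟨h2, k₀, hk₀⟩ := hc
    rw [Fintype.sum_eq_single k₀ (fun k hk => by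
      have hz : phiFun p j i hp2 hj y k = 0 := by
        unfold phiFun
        apply dif_neg
        rintro ⟨h2', hw'⟩
        apply hk
        have hcan := hw'.symm.trans hk₀
        have := Nat.eq_of_mul_eq_mul_left (show 0 < p by omega) hcan
        exact Subtype.ext (by omega)
      rw [hz]
      simp)]
    have hval : ((phiFun p j i hp2 hj y k₀ : ↥(lSub p (j - 1))) : B p 1)
        = ((-1 : ZMod p) ^ y.t.card) • Finsupp.single (downM y) 1 := by
      unfold phiFun
      rw [dif_pos ⟨h2, hk₀⟩]
      rfl
    rw [hval, map_smul, upL_single, one_smul]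
    have ha : p * (j - 1) + (k₀ : ℕ) - (downM y).wt p = y.e 1 := by
      have hcan := cond_cancel hp2 h2 hk₀
      omega
    rw [ha, upM_downM h2]
    have hcard : (downM y).t.card + 1 = y.t.card := by
      rw [downM_t_card h2]
      have := Finset.card_ne_zero_of_mem h2
      omega
    rw [hcard, smul_smul, neg_one_sq_pow, one_smul]
    rfl
  · push_neg at hc
    have hzero : ∀ k : Set.Icc (i + 1) (p - 1), phiFun p j i hp2 hj y k = 0 := by
      intro k
      unfold phiFun
      apply dif_neg
      rintro ⟨h2, hw⟩
      exact (hc h2 k) hw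
    rw [Finset.sum_eq_zero (fun k _ => by rw [hzero k]; simp)]
    symm
    rw [Submodule.Quotient.mk_eq_zero]
    by_cases hF : p * (p * j) ≤ y.wtF p
    · have : Submodule.Quotient.mk (p := FSub p (p * j)) (Finsupp.single y (1 : ZMod p)) = 0 :=
        (Submodule.Quotient.mk_eq_zero _).mpr (single_mem_monSpan hF 1)
      rw [this]
      exact zero_mem _
    · push_neg at hF
      have hwt : y.wt p ≤ p * (p * j + i) := by
        by_cases h2 : 2 ∈ y.t
        · have hdec := wtF_decomp (p := p) h2
          have hWt := wt_eq_wtF_add (p := p) y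
          rw [if_pos h2] at hWt
          set N₀ := y.e 1 + (downM y).wt p with hN₀
          set X1 := p * (j - 1) with hX1
          have hpj : p * j = X1 + p := pj_eq p j hj
          have hlt : N₀ < p * j := by
            by_contra hge
            push_neg at hge
            have := Nat.mul_le_mul_left p hge
            linarith
          have hle : N₀ ≤ X1 + i := by
            by_contra hgt
            push_neg at hgt
            have hkv : i + 1 ≤ N₀ - X1 ∧ N₀ - X1 ≤ p - 1 := by omega
            refine (hc h2 ⟨N₀ - X1, Set.mem_Icc.mpr hkv⟩) ?_
            show y.wtF p = p * (X1 + (N₀ - X1))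
            rw [hdec]
            congr 1
            omega
          have ha := arith2 p j i hj
          rw [← hX1] at ha
          have h1 : p * (p * j + i) = p ^ 2 * j + p * i := by ring
          have h2' : p * N₀ ≤ p * (X1 + i) := Nat.mul_le_mul_left p hle
          linarith
        · have heq := wtF_eq_wt (p := p) h2
          have h1 : p * (p * j) ≤ p * (p * j + i) := Nat.mul_le_mul_left p (by omega)
          linarith
      exact ⟨⟨Finsupp.single y 1, single_mem_monSpan hwt 1⟩, rfl⟩

lemma Phi2_upL_single (p j i : ℕ) (hp2 : 2 ≤ p) (hj : 1 ≤ j)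
    (k : Set.Icc (i + 1) (p - 1)) (u : Mono 1) (hu : u.wt p ≤ p * (j - 1)) :
    PhiL p j i hp2 hj (upL p j (k : ℕ) (Finsupp.single u 1))
      = Pi.single k ⟨Finsupp.single u 1, single_mem_monSpan hu 1⟩ := by
  rw [upL_single, one_smul, map_smul, PhiL_single, one_smul]
  set a := p * (j - 1) + (k : ℕ) - u.wt p with ha
  have haw : a + u.wt p = p * (j - 1) + (k : ℕ) := by
    have h1 : u.wt p ≤ p * (j - 1) + (k : ℕ) := le_trans hu (by omega)
    omega
  have hwF : (upM a u).wtF p = p * (p * (j - 1) + (k : ℕ)) := by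
    rw [wtF_upM, ← haw]
    ring
  funext k'
  rw [Pi.smul_apply]
  by_cases hk' : k' = k
  · subst hk'
    rw [Pi.single_eq_same]
    apply Subtype.ext
    show (((-1 : ZMod p) ^ (u.t.card + 1)) • (phiFun p j i hp2 hj (upM a u) k' : B p 1)) = _
    have hval : ((phiFun p j i hp2 hj (upM a u) k' : ↥(lSub p (j - 1))) : B p 1)
        = ((-1 : ZMod p) ^ (u.t.card + 1)) • Finsupp.single (downM (upM a u)) 1 := by
      unfold phiFun
      rw [dif_pos ⟨two_mem_upM a u, hwF⟩, upM_t_card]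
      rfl
    rw [hval, downM_upM, smul_smul, neg_one_sq_pow, one_smul]
  · have hz : phiFun p j i hp2 hj (upM a u) k' = 0 := by
      unfold phiFun
      apply dif_neg
      rintro ⟨h2', hw'⟩
      apply hk'
      have hcan := hw'.symm.trans hwF
      have := Nat.eq_of_mul_eq_mul_left (show 0 < p by omega) hcan
      exact Subtype.ext (by omega)
    rw [hz, smul_zero, Pi.single_eq_of_ne hk']

lemma Phi2_surj (p j i : ℕ) (hp2 : 2 ≤ p) (hj : 1 ≤ j) :
    Function.Surjective (Phi2 p j i hp2 hj) := by
  intro g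
  suffices h : ∀ (k : Set.Icc (i + 1) (p - 1)) (x : ↥(lSub p (j - 1))),
      Pi.single k x ∈ LinearMap.range (Phi2 p j i hp2 hj) by
    have hg : g ∈ LinearMap.range (Phi2 p j i hp2 hj) := by
      rw [← Finset.univ_sum_single g]
      exact Submodule.sum_mem _ (fun k _ => h k (g k))
    exact hg
  intro k x
  obtain ⟨w, hw⟩ := x
  refine Submodule.span_induction
    (p := fun w hw => Pi.single k
      (⟨w, hw⟩ : ↥(lSub p (j - 1))) ∈ LinearMap.range (Phi2 p j i hp2 hj))
    ?_ ?_ ?_ ?_ hw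
  · beta_reduce
    rintro w ⟨u, hu, rfl⟩
    exact ⟨Submodule.Quotient.mk (Submodule.Quotient.mk (upL p j (k : ℕ)
      (Finsupp.single u 1))), by
        rw [Phi2_mk, Phi2_upL_single p j i hp2 hj k u hu]⟩
  · beta_reduce
    rw [show (⟨0, _⟩ : ↥(lSub p (j - 1))) = 0 from rfl, Pi.single_zero]
    exact zero_mem _
  · intro w₁ w₂ h₁ h₂ ih₁ ih₂
    beta_reduce
    beta_reduce at ih₁ ih₂
    rw [show (⟨w₁ + w₂, _⟩ : ↥(lSub p (j - 1)))
      = (⟨w₁, h₁⟩ : ↥(lSub p (j - 1))) + ⟨w₂, h₂⟩ from rfl, Pi.single_add]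
    exact add_mem ih₁ ih₂
  · intro c w h ih
    beta_reduce
    beta_reduce at ih
    rw [show (⟨c • w, _⟩ : ↥(lSub p (j - 1)))
      = c • (⟨w, h⟩ : ↥(lSub p (j - 1))) from rfl, Pi.single_smul]
    exact Submodule.smul_mem _ c ih

lemma PsiL_Phi2 (p j i : ℕ) (hp2 : 2 ≤ p) (hj : 1 ≤ j) :
    (PsiL p j i) ∘ₗ (Phi2 p j i hp2 hj) = LinearMap.id := by
  apply Submodule.linearMap_qext
  apply Submodule.linearMap_qext
  apply Finsupp.lhom_ext
  intro y c
  simp only [LinearMap.comp_apply, Submodule.mkQ_apply, LinearMap.id_apply]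
  have hc : (Finsupp.single y c : B p 1) = c • Finsupp.single y 1 := by
    rw [Finsupp.smul_single, smul_eq_mul, mul_one]
  rw [hc, Submodule.Quotient.mk_smul, Submodule.Quotient.mk_smul, map_smul, map_smul,
    Phi2_mk p j i hp2 hj, PsiL_PhiL_single p j i hp2 hj y]

end Main
section Equivariance

open Finsupp

lemma down_Qtarget {p r : ℕ} (hr : r ≤ 2) (y : Mono 1) {a : ℕ} (h3 : 3 ≤ a) :
    downM (Qtarget p r y a) = Qtarget p r (downM y) (a - 1) := by
  apply Mono.ext'
  · ext k
    by_cases hk : k = 0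
    · subst hk
      simp only [(downM (Qtarget p r y a)).he, (Qtarget p r (downM y) (a - 1)).he]
    · rw [downM_e_apply _ hk, Qtarget_e_lt y (by omega : r < a), Finsupp.add_apply]
      by_cases hra : r < a - 1
      · rw [Qtarget_e_lt (downM y) hra, Finsupp.add_apply, downM_e_apply _ hk]
        congr 1
        rw [Finsupp.single_apply, Finsupp.single_apply]
        have hiff : (a - r = k + 1) ↔ (a - 1 - r = k) := by omega
        rw [if_congr hiff rfl rfl]
      · rw [Qtarget_e_ge (downM y) hra, downM_e_apply _ hk,
          Finsupp.single_apply, if_neg (by omega), add_zero]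
  · rw [downM_t, Qtarget_t, Qtarget_t, downM_t]
    ext b
    simp only [Finset.mem_image, Finset.mem_erase]
    constructor
    · rintro ⟨c, ⟨hc2, hca, hct⟩, rfl⟩
      have := y.ht c hct
      exact ⟨by omega, c, ⟨hc2, hct⟩, rfl⟩
    · rintro ⟨hb, c, ⟨hc2, hct⟩, rfl⟩
      have := y.ht c hct
      exact ⟨c, ⟨hc2, by omega, hct⟩, rfl⟩

lemma filter_card_insert_erase {y : Mono 1} (h2 : 2 ∈ y.t) {a : ℕ} (h3 : 3 ≤ a) :
    (y.t.filter (fun b => b < a)).card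
      = ((y.t.erase 2).filter (fun b => b < a)).card + 1 := by
  conv_lhs => rw [← Finset.insert_erase h2]
  exact filter_insert_two _ (Finset.notMem_erase _ _) h3

lemma filter_card_down {y : Mono 1} {a : ℕ} (h3 : 3 ≤ a) :
    (((y.t.erase 2).image (· - 1)).filter (fun b => b < a - 1)).card
      = ((y.t.erase 2).filter (fun b => b < a)).card := by
  rw [Finset.filter_image, Finset.card_image_of_injOn]
  · congr 1
    apply Finset.filter_congr
    intro b hb
    have hb2 := Finset.ne_of_mem_erase hb
    have hb1 := y.ht b (Finset.mem_of_mem_erase hb)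
    omega
  · intro b hb c hc h
    have h' : b - 1 = c - 1 := h
    have hb2 := Finset.ne_of_mem_erase (Finset.mem_of_mem_filter _ hb)
    have hc2 := Finset.ne_of_mem_erase (Finset.mem_of_mem_filter _ hc)
    have hb1 := y.ht b (Finset.mem_of_mem_erase (Finset.mem_of_mem_filter _ hb))
    have hc1 := y.ht c (Finset.mem_of_mem_erase (Finset.mem_of_mem_filter _ hc))
    omega

lemma phiFun_target_two (p j i : ℕ) (hp2 : 2 ≤ p) (hj : 1 ≤ j) (r : ℕ) (y : Mono 1)
    (k : Set.Icc (i + 1) (p - 1)) :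
    phiFun p j i hp2 hj (Qtarget p r y 2) k = 0 := by
  unfold phiFun
  apply dif_neg
  rintro ⟨ha, -⟩
  rw [Qtarget_t] at ha
  exact (Finset.notMem_erase 2 y.t) ha

lemma phiFun_target_cond (p j r : ℕ) (hr : r ≤ 2) {y : Mono 1} {m' : ℕ}
    (hm' : m' ∈ y.t) (h3 : 3 ≤ m') (kv : ℕ) :
    ((2 ∈ (Qtarget p r y m').t ∧ (Qtarget p r y m').wtF p = p * (p * (j - 1) + kv))
      ↔ (2 ∈ y.t ∧ y.wtF p = p * (p * (j - 1) + kv))) := by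
  rw [two_mem_Qtarget_t y h3, wtF_Qtarget y hm' h3 hr]

lemma PhiL_Qmono_val (p j i : ℕ) (hp2 : 2 ≤ p) (hj : 1 ≤ j) (r : ℕ) (hr : r ≤ 2)
    (y : Mono 1) (k : Set.Icc (i + 1) (p - 1)) :
    ((PhiL p j i hp2 hj (Qmono p r y) k : ↥(lSub p (j - 1))) : B p 1)
      = Qop p 1 r ((phiFun p j i hp2 hj y k : ↥(lSub p (j - 1))) : B p 1) := by
  have hexp : PhiL p j i hp2 hj (Qmono p r y)
      = ∑ m' ∈ y.t, ((-1 : ZMod p) ^ ((y.t.filter (fun a => a < m')).card)) •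
          phiFun p j i hp2 hj (Qtarget p r y m') := by
    unfold Qmono
    rw [map_sum]
    exact Finset.sum_congr rfl fun m' _ => by rw [map_smul, PhiL_single, one_smul]
  rw [hexp, Finset.sum_apply, Submodule.coe_sum]
  by_cases hcnd : 2 ∈ y.t ∧ y.wtF p = p * (p * (j - 1) + (k : ℕ))
  · obtain ⟨h2, hwF⟩ := hcnd
    have hT := Finset.card_ne_zero_of_mem h2
    have hrhs : ((phiFun p j i hp2 hj y k : ↥(lSub p (j - 1))) : B p 1)
        = ((-1 : ZMod p) ^ y.t.card) • Finsupp.single (downM y) 1 := by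
      unfold phiFun
      rw [dif_pos ⟨h2, hwF⟩]
      rfl
    rw [hrhs, map_smul,
      show Qop p 1 r (Finsupp.single (downM y) 1) = Qmono p r (downM y) from by
        rw [Qop_single, one_smul]]
    unfold Qmono
    rw [downM_t, Finset.sum_image (fun a ha b hb h => by
      have h' : a - 1 = b - 1 := h
      have ha1 := y.ht a (Finset.mem_of_mem_erase ha)
      have hb1 := y.ht b (Finset.mem_of_mem_erase hb)
      have ha2 := Finset.ne_of_mem_erase ha
      have hb2 := Finset.ne_of_mem_erase hb
      omega)]
    rw [Finset.smul_sum]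
    -- kill the m' = 2 term on the left
    have hzero2 : (((((-1 : ZMod p) ^ ((y.t.filter (fun a => a < 2)).card)) •
        phiFun p j i hp2 hj (Qtarget p r y 2)) k : ↥(lSub p (j - 1))) : B p 1) = 0 := by
      rw [Pi.smul_apply, phiFun_target_two p j i hp2 hj r y k, smul_zero]
      rfl
    rw [← Finset.add_sum_erase y.t _ h2, hzero2, zero_add]
    apply Finset.sum_congr rfl
    intro a ha
    have ha2 := Finset.ne_of_mem_erase ha
    have hat := Finset.mem_of_mem_erase ha
    have h3 : 3 ≤ a := by have := y.ht a hat; omega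
    -- left term
    rw [Pi.smul_apply, SetLike.val_smul]
    have hcondt : 2 ∈ (Qtarget p r y a).t ∧
        (Qtarget p r y a).wtF p = p * (p * (j - 1) + (k : ℕ)) :=
      (phiFun_target_cond p j r hr hat h3 (k : ℕ)).mpr ⟨h2, hwF⟩
    have hval : ((phiFun p j i hp2 hj (Qtarget p r y a) k : ↥(lSub p (j - 1))) : B p 1)
        = ((-1 : ZMod p) ^ ((Qtarget p r y a).t.card)) •
            Finsupp.single (downM (Qtarget p r y a)) 1 := by
      unfold phiFun
      rw [dif_pos hcondt]
      rfl
    rw [hval, down_Qtarget hr y h3, Qtarget_t, Finset.card_erase_of_mem hat]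
    rw [smul_smul, smul_smul]
    congr 1
    rw [filter_card_insert_erase h2 h3, filter_card_down h3]
    have hTT : y.t.card = (y.t.card - 1) + 1 := by omega
    rw [hTT, show y.t.card - 1 + 1 - 1 = y.t.card - 1 from rfl, pow_succ, pow_succ]
    ring
  · have hr0 : phiFun p j i hp2 hj y k = 0 := by
      unfold phiFun
      exact dif_neg hcnd
    rw [hr0, show (((0 : ↥(lSub p (j - 1)))) : B p 1) = 0 from rfl, map_zero]
    apply Finset.sum_eq_zero
    intro m' hm'
    by_cases hm2 : m' = 2
    · subst hm2
      rw [Pi.smul_apply, phiFun_target_two p j i hp2 hj r y k, smul_zero]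
      rfl
    · have h3 : 3 ≤ m' := by have := y.ht m' hm'; omega
      have hz : phiFun p j i hp2 hj (Qtarget p r y m') k = 0 := by
        unfold phiFun
        apply dif_neg
        intro hcondt
        exact hcnd ((phiFun_target_cond p j r hr hm' h3 (k : ℕ)).mp hcondt)
      rw [Pi.smul_apply, hz, smul_zero]
      rfl

lemma deg_cond (p j : ℕ) (hp2 : 2 ≤ p) (hj : 1 ≤ j) {y : Mono 1} {kv : ℕ}
    (h2 : 2 ∈ y.t) (hwF : y.wtF p = p * (p * (j - 1) + kv)) :
    y.deg p = (downM y).deg p + phiShift p j kv := by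
  have hN : (y.e 1) + (downM y).wt p = p * (j - 1) + kv := (cond_cancel hp2 h2 hwF).symm
  have hd := deg_upM_phi (show 1 ≤ p by omega) (y.e 1) (downM y) hN
  rw [upM_downM h2] at hd
  unfold phiShift
  have hY : 1 ≤ 2 * p ^ 2 := by
    have h1 : 1 ≤ p ^ 2 := Nat.one_le_pow _ _ (by omega)
    omega
  generalize hX : 2 * (p - 1) * (p * (j - 1) + kv) = X at hd ⊢
  generalize hY2 : 2 * p ^ 2 = Y at hd hY ⊢
  omega

lemma PhiL_deg (p j i : ℕ) (hp2 : 2 ≤ p) (hj : 1 ≤ j) {d : ℕ} {w : B p 1}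
    (hw : w ∈ monSpan p 1 (fun x => x.deg p = d)) (k : Set.Icc (i + 1) (p - 1)) :
    (phiShift p j (k : ℕ) ≤ d ∧
      ((PhiL p j i hp2 hj w k : ↥(lSub p (j - 1))) : B p 1)
        ∈ monSpan p 1 (fun x => x.deg p = d - phiShift p j (k : ℕ)))
    ∨ (PhiL p j i hp2 hj w) k = 0 := by
  have hval : (PhiL p j i hp2 hj w) k
      = ∑ y ∈ w.support, (w y) • phiFun p j i hp2 hj y k := by
    unfold PhiL
    rw [Finsupp.lsum_apply, Finsupp.sum, Finset.sum_apply]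
    apply Finset.sum_congr rfl
    intro y _
    rfl
  by_cases hphi : phiShift p j (k : ℕ) ≤ d
  · left
    refine ⟨hphi, ?_⟩
    rw [hval, Submodule.coe_sum]
    apply Submodule.sum_mem
    intro y hy
    rw [SetLike.val_smul]
    apply Submodule.smul_mem
    by_cases hc : 2 ∈ y.t ∧ y.wtF p = p * (p * (j - 1) + (k : ℕ))
    · have hv : ((phiFun p j i hp2 hj y k : ↥(lSub p (j - 1))) : B p 1)
          = ((-1 : ZMod p) ^ y.t.card) • Finsupp.single (downM y) 1 := by
        unfold phiFun
        rw [dif_pos hc]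
        rfl
      rw [hv]
      apply Submodule.smul_mem
      apply single_mem_monSpan
      have hdeg := mem_monSpan.mp hw y hy
      have hdc := deg_cond p j hp2 hj hc.1 hc.2
      omega
    · have hv : phiFun p j i hp2 hj y k = 0 := by
        unfold phiFun
        exact dif_neg hc
      rw [hv, show (((0 : ↥(lSub p (j - 1)))) : B p 1) = 0 from rfl]
      exact zero_mem _
  · right
    rw [hval]
    apply Finset.sum_eq_zero
    intro y hy
    have hv : phiFun p j i hp2 hj y k = 0 := by
      unfold phiFun
      apply dif_neg
      rintro ⟨h2, hw'⟩
      have hdeg := mem_monSpan.mp hw y hy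
      have hdc := deg_cond p j hp2 hj h2 hw'
      omega
    rw [hv, smul_zero]

end Equivariance
lemma part1_pt (p j i : ℕ) (hp2 : 2 ≤ p) (hj : 1 ≤ j) (hi : i ≤ p - 2) {y : Mono 1}
    (hy : y.wt p ≤ p * (p * j + i)) :
    (p * (p * j) ≤ y.wtF p) ↔
      (2 ∉ y.t ∧ p ^ 2 * j ≤ y.wt p ∧ y.wt p ≤ p ^ 2 * j + p * i) := by
  have hWt := wt_eq_wtF_add (p := p) y
  have h1 : p * (p * j + i) = p ^ 2 * j + p * i := by ring
  have h2 : p * (p * j) = p ^ 2 * j := by ring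
  have h3 : p * i + 2 * p ≤ p * p := by
    have h4 := Nat.mul_le_mul_left p hi
    have h5 : p * (p - 2) + 2 * p = p * p := by
      have h6 : p - 2 + 2 = p := by omega
      calc p * (p - 2) + 2 * p = p * ((p - 2) + 2) := by ring
        _ = p * p := by rw [h6]
    linarith
  have hp2' : p ^ 2 = p * p := by ring
  constructor
  · intro h
    have h2t : 2 ∉ y.t := by
      intro hmem
      rw [if_pos hmem] at hWt
      linarith
    rw [if_neg h2t, add_zero] at hWt
    exact ⟨h2t, by linarith, by linarith⟩
  · rintro ⟨h2t, hlo, hhi⟩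
    rw [if_neg h2t, add_zero] at hWt
    linarith

/-- Fix `j ≥ 1` and `0 ≤ i ≤ p − 2`, and let
`ψ : ℓ_{pj+i} → B₁/F^{pj}B₁` be the composite of inclusion and projection (the
hypotheses `hF`, `hR`, `hL` record the (true) facts that `F^{pj}B₁`, `range ψ` and
`ℓ_{j−1}` are stable under the `E(2)`-action, so that the induced operations on the
quotients make sense).  Then:
* (exactness at `ℓ_{pj+i}`) `ker ψ = ⊕_{k=0}^{i} M₂(pj+k)`;
* the cokernel of `ψ` is spanned by the classes of the monomials `m τ̄₂` with `m`
  a `τ̄₂`-free monomial satisfying `p(p(j−1)+i) < wt m ≤ p²j − p`;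
* the induced `E(2)`-action on `coker ψ` satisfies `Q_r[m τ̄₂] = [(Q_r m) τ̄₂]`;
* consequently `coker ψ ≅ ⊕_{k=i+1}^{p−1} Σ^{φ(j,k)} ℓ_{j−1}` as graded `E(2)`-modules,
  where `φ(j,k) = 2(p−1)(p(j−1)+k) + 2p² − 1`.
Altogether this yields the exact sequence of `E(2)`-modules
`0 → ⊕_{k=0}^{i} M₂(pj+k) → ℓ_{pj+i} → B₁/F^{pj}B₁ → ⊕_{k=i+1}^{p−1} Σ^{φ(j,k)} ℓ_{j−1} → 0`. -/
theorem four_term_exact_sequence (p : ℕ) (hp : p.Prime) (hodd : Odd p)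
    (j i : ℕ) (hj : 1 ≤ j) (hi : i ≤ p - 2)
    (hF : ∀ r, r ≤ 2 → FSub p (p * j) ≤ (FSub p (p * j)).comap (Qop p 1 r))
    (hR : ∀ (r : ℕ) (hr : r ≤ 2), LinearMap.range (psiMap p j i) ≤
      (LinearMap.range (psiMap p j i)).comap
        (Submodule.mapQ (FSub p (p * j)) (FSub p (p * j)) (Qop p 1 r) (hF r hr)))
    (hL : ∀ r, r ≤ 2 → ∀ x ∈ lSub p (j - 1), Qop p 1 r x ∈ lSub p (j - 1)) :
    (LinearMap.ker (psiMap p j i) =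
      Submodule.comap (lSub p (p * j + i)).subtype
        (monSpan p 1 (fun x =>
          2 ∉ x.t ∧ p ^ 2 * j ≤ x.wt p ∧ x.wt p ≤ p ^ 2 * j + p * i))) ∧
    (LinearMap.range (psiMap p j i) ⊔
      Submodule.span (ZMod p)
        ((fun m : Mono 1 =>
            Submodule.Quotient.mk (Bmul p 1 (Finsupp.single m 1) (tau2elem p))) ''
          genSet p j i) = ⊤) ∧
    (∀ (r : ℕ) (hr : r ≤ 2), ∀ m ∈ genSet p j i,
      Submodule.mapQ (FSub p (p * j)) (FSub p (p * j)) (Qop p 1 r) (hF r hr)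
          (Submodule.Quotient.mk (Bmul p 1 (Finsupp.single m 1) (tau2elem p))) -
        Submodule.Quotient.mk (Bmul p 1 (Qop p 1 r (Finsupp.single m 1)) (tau2elem p))
        ∈ LinearMap.range (psiMap p j i)) ∧
    (∃ E : ((B p 1 ⧸ FSub p (p * j)) ⧸ LinearMap.range (psiMap p j i)) ≃ₗ[ZMod p]
        (Set.Icc (i + 1) (p - 1) → ↥(lSub p (j - 1))),
      (∀ (r : ℕ) (hr : r ≤ 2) v,
        E (Submodule.mapQ (LinearMap.range (psiMap p j i)) (LinearMap.range (psiMap p j i))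
            (Submodule.mapQ (FSub p (p * j)) (FSub p (p * j)) (Qop p 1 r) (hF r hr))
            (hR r hr) v) =
          fun k => ⟨Qop p 1 r ((E v) k : B p 1), hL r hr _ ((E v) k).2⟩) ∧
      (∀ (d : ℕ) v,
        v ∈ Submodule.map
            ((LinearMap.range (psiMap p j i)).mkQ ∘ₗ (FSub p (p * j)).mkQ)
            (monSpan p 1 (fun x => x.deg p = d)) →
          ∀ k : Set.Icc (i + 1) (p - 1),
            (phiShift p j k ≤ d ∧
              ((E v) k : B p 1) ∈ monSpan p 1 (fun x => x.deg p = d - phiShift p j k)) ∨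
            (E v) k = 0)) := by
  have hp2 : 2 ≤ p := hp.two_le
  refine ⟨?_, ?_, ?_, ?_⟩
  · -- Part 1: kernel computation
    ext x
    simp only [LinearMap.mem_ker, Submodule.mem_comap]
    rw [show psiMap p j i x
        = Submodule.Quotient.mk ((lSub p (p * j + i)).subtype x) from rfl,
      Submodule.Quotient.mk_eq_zero]
    have hx : ∀ y ∈ ((lSub p (p * j + i)).subtype x).support, y.wt p ≤ p * (p * j + i) :=
      mem_monSpan.mp x.2
    show ((lSub p (p * j + i)).subtype x)
        ∈ monSpan p 1 (fun y => p * (p * j) ≤ y.wtF p) ↔ _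
    rw [mem_monSpan, mem_monSpan]
    constructor
    · intro h y hy
      exact (part1_pt p j i hp2 hj hi (hx y hy)).mp (h y hy)
    · intro h y hy
      exact (part1_pt p j i hp2 hj hi (hx y hy)).mpr (h y hy)
  · -- Part 2: cokernel spanning
    rw [eq_top_iff]
    rintro v -
    obtain ⟨w, rfl⟩ := Submodule.Quotient.mk_surjective _ v
    induction w using Finsupp.induction_linear with
    | zero =>
      rw [show Submodule.Quotient.mk (p := FSub p (p * j)) (0 : B p 1) = 0 from rfl]
      exact zero_mem _
    | add f g hf hg =>
      rw [show Submodule.Quotient.mk (p := FSub p (p * j)) (f + g)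
          = Submodule.Quotient.mk f + Submodule.Quotient.mk g from rfl]
      exact add_mem hf hg
    | single y b =>
      by_cases hF : p * (p * j) ≤ y.wtF p
      · rw [(Submodule.Quotient.mk_eq_zero (FSub p (p * j))).mpr
          (single_mem_monSpan (P := fun x : Mono 1 => p * (p * j) ≤ x.wtF p) hF b)]
        exact zero_mem _
      push_neg at hF
      by_cases hl : y.wt p ≤ p * (p * j + i)
      · apply Submodule.mem_sup_left
        exact ⟨⟨Finsupp.single y b, single_mem_monSpan hl b⟩, rfl⟩
      push_neg at hl
      have h2 : 2 ∈ y.t := by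
        by_contra h2
        have heq := wtF_eq_wt (p := p) h2
        have h1 : p * (p * j) ≤ p * (p * j + i) := Nat.mul_le_mul_left p (by omega)
        linarith
      set m : Mono 1 := ⟨y.e, y.t.erase 2, y.he,
        fun b hb => y.ht b (Finset.mem_of_mem_erase hb)⟩ with hm
      have hmwt : m.wt p = y.wtF p := rfl
      have haddT2 : addT2 m = y := Mono.ext' rfl (Finset.insert_erase h2)
      have h2m : 2 ∉ m.t := Finset.notMem_erase _ _
      have hgen : m ∈ genSet p j i := by
        refine ⟨h2m, ?_, ?_⟩
        · have hWt := wt_eq_wtF_add (p := p) y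
          rw [if_pos h2] at hWt
          have ha := arith2 p j i hj
          have h1 : p * (p * j + i) = p ^ 2 * j + p * i := by ring
          rw [hmwt]
          linarith
        · obtain ⟨s, hs⟩ := dvd_wtF (p := p) y
          have hslt : s < p * j := by
            by_contra hge
            push_neg at hge
            have := Nat.mul_le_mul_left p hge
            linarith
          have h4 := Nat.mul_le_mul_left p (show s + 1 ≤ p * j from hslt)
          have h5 : p * (s + 1) = p * s + p := by ring
          have h6 : p * (p * j) = p ^ 2 * j := by ring
          rw [hmwt, hs]
          exact Nat.le_sub_of_add_le (by linarith)
      have hBmul := Bmul_single_t2 (p := p) m h2m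
      rw [haddT2] at hBmul
      have hsingle1 : Finsupp.single y b
          = (b * (-1 : ZMod p) ^ m.t.card) • Bmul p 1 (Finsupp.single m 1) (tau2elem p) := by
        rw [hBmul, smul_smul, mul_assoc, neg_one_sq_pow, mul_one, Finsupp.smul_single,
          smul_eq_mul, mul_one]
      apply Submodule.mem_sup_right
      rw [hsingle1, Submodule.Quotient.mk_smul]
      exact Submodule.smul_mem _ _
        (Submodule.subset_span ⟨m, hgen, rfl⟩)
  · -- Part 3: derivation property modulo the image
    intro r hr m hm
    rw [Submodule.mapQ_apply,
      show Submodule.Quotient.mk (Qop p 1 r (Bmul p 1 (Finsupp.single m 1) (tau2elem p)))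
          - Submodule.Quotient.mk (Bmul p 1 (Qop p 1 r (Finsupp.single m 1)) (tau2elem p))
        = Submodule.Quotient.mk (p := FSub p (p * j))
            (Qop p 1 r (Bmul p 1 (Finsupp.single m 1) (tau2elem p))
              - Bmul p 1 (Qop p 1 r (Finsupp.single m 1)) (tau2elem p)) from
        (Submodule.Quotient.mk_sub _).symm,
      Qop_Bmul_tau2 r hr m hm.1, Submodule.Quotient.mk_smul]
    rcases (show r < 2 ∨ r = 2 by omega) with h | h
    · have hmem : Finsupp.single (Qtarget p r (addT2 m) 2) (1 : ZMod p) ∈ FSub p (p * j) := by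
        apply single_mem_monSpan
        have hwt := wt_Qtarget_addT2_two (p := p) m hm.1 h
        have hfr : (Qtarget p r (addT2 m) 2).wtF p = (Qtarget p r (addT2 m) 2).wt p :=
          wtF_eq_wt (Qtarget_addT2_two_notmem m hm.1)
        have hg := hm.2.1
        have ha := arith2 p j i hj
        have h2' : p * (p * j) = p ^ 2 * j := by ring
        rw [hfr, hwt, h2']
        generalize hA : p * (p * (j - 1) + i) = A at hg ha
        generalize hB : p ^ 2 * j = Bv at ha ⊢
        generalize hC : p * i = C at ha
        generalize hD : p ^ 2 = Dv at ha ⊢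
        omega
      rw [(Submodule.Quotient.mk_eq_zero _).mpr hmem, smul_zero]
      exact zero_mem _
    · subst h
      rw [Qtarget_addT2_two_eq m hm.1]
      have hml : Finsupp.single m (1 : ZMod p) ∈ lSub p (p * j + i) := by
        apply single_mem_monSpan
        have hup := hm.2.2
        have h1 : p * (p * j + i) = p ^ 2 * j + p * i := by ring
        rw [h1]
        generalize hB : p ^ 2 * j = Bv at hup ⊢
        generalize hC : p * i = C
        omega
      exact Submodule.smul_mem _ _ ⟨⟨_, hml⟩, rfl⟩
  · -- Part 4: the cokernel isomorphism
    refine ⟨LinearEquiv.ofBijective (Phi2 p j i hp2 hj)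
      ⟨fun a b hab => ?_, Phi2_surj p j i hp2 hj⟩, ?_, ?_⟩
    · have ha := LinearMap.congr_fun (PsiL_Phi2 p j i hp2 hj) a
      have hb := LinearMap.congr_fun (PsiL_Phi2 p j i hp2 hj) b
      simp only [LinearMap.comp_apply, LinearMap.id_apply] at ha hb
      rw [← ha, ← hb, hab]
    · -- E(2)-equivariance
      intro r hr v
      obtain ⟨v1, rfl⟩ := Submodule.Quotient.mk_surjective _ v
      obtain ⟨w, rfl⟩ := Submodule.Quotient.mk_surjective _ v1
      funext k
      apply Subtype.ext
      show ((Phi2 p j i hp2 hj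
          (Submodule.mapQ _ _ (Submodule.mapQ _ _ (Qop p 1 r) (hF r hr)) (hR r hr)
            (Submodule.Quotient.mk (Submodule.Quotient.mk w))) k
          : ↥(lSub p (j - 1))) : B p 1)
        = Qop p 1 r ((Phi2 p j i hp2 hj
            (Submodule.Quotient.mk (Submodule.Quotient.mk w)) k
            : ↥(lSub p (j - 1))) : B p 1)
      rw [Submodule.mapQ_apply, Submodule.mapQ_apply, Phi2_mk, Phi2_mk]
      induction w using Finsupp.induction_linear with
      | zero =>
        rw [map_zero, map_zero]
        show ((0 : ↥(lSub p (j - 1))) : B p 1) = Qop p 1 r ((0 : ↥(lSub p (j - 1))) : B p 1)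
        rw [show ((0 : ↥(lSub p (j - 1))) : B p 1) = 0 from rfl, map_zero]
      | add f g hf hg =>
        rw [map_add, map_add, map_add]
        show (((PhiL p j i hp2 hj (Qop p 1 r f) + PhiL p j i hp2 hj (Qop p 1 r g)) k
            : ↥(lSub p (j - 1))) : B p 1) = _
        rw [Pi.add_apply, Pi.add_apply, Submodule.coe_add, Submodule.coe_add, map_add,
          hf, hg]
      | single y c =>
        rw [Qop_single, map_smul, PhiL_single, Pi.smul_apply, Pi.smul_apply,
          SetLike.val_smul, SetLike.val_smul, map_smul,
          PhiL_Qmono_val p j i hp2 hj r hr y k]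
    · -- degrees
      intro d v hv k
      obtain ⟨w, hw, rfl⟩ := hv
      show (phiShift p j (k : ℕ) ≤ d ∧
          ((PhiL p j i hp2 hj w k : ↥(lSub p (j - 1))) : B p 1)
            ∈ monSpan p 1 (fun x => x.deg p = d - phiShift p j (k : ℕ)))
        ∨ (PhiL p j i hp2 hj w) k = 0
      exact PhiL_deg p j i hp2 hj hw k
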